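/- Let m > 1, m₀ ∈ (1, m), α ≥ 0, c₁ < 0 < c₂, k₁ > 0, k₂ > 0. If ((m−1)/(α+m−1)) · (−c₁(α+m−1)/(2α))^{−α/(m−1)} · k₁^{(α+m−1)/(m−1)} + ((m₀−1)/(α+m−1)) · (−c₁(α+m−1)/(2(α+m−m₀)))^{−(α+m−m₀)/(m₀−1)} · c₂^{(α+m−1)/(m₀−1)} < k₂²/2, then there exists β ∈ (0,1) such that for all x ≥ 0: c₁ + c₂ x^{m₀−1} + k₁ x^{m−1} − (1−β)(k₂²/2) x^{α+m−1} ≤ 0. -/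

import Mathlib

/-!
Both lower-order terms are absorbed by the ε-Young inequality
`k x^u ≤ A + (u/s) (A s/a)^(-a/u) k^(s/u) x^s` with `s = a + u`, which is weighted AM-GM with
weights `a/s`, `u/s`; taking `A = -c₁/2` for each, the two constants cancel `c₁` and the two
coefficients of `x^(α+m-1)` add up to the left side of `hcond`, which leaves room for some `β`.
-/

open Real Set

lemma mul_rpow_le_add_mul_rpow_of_pos {A k a u x : ℝ} (hA : 0 < A) (hk : 0 ≤ k) (ha : 0 < a)
    (hu : 0 < u) (hx : 0 ≤ x) :
    k * x ^ u ≤ A + u / (a + u) * (A * (a + u) / a) ^ (-(a / u)) * k ^ ((a + u) / u)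
      * x ^ (a + u) := by
  set s := a + u
  set D := A * s / a with hD_def
  have hs : 0 < s := by positivity
  have hD : 0 < D := by positivity
  have hweights : a / s + u / s = 1 := by rw [← add_div, div_self hs.ne']
  have hamgm := geom_mean_le_arith_mean2_weighted (by positivity) (by positivity) hD.le
    (by positivity : 0 ≤ D ^ (-(a / u)) * k ^ (s / u) * x ^ s) hweights
  have hgeom : D ^ (a / s) * (D ^ (-(a / u)) * k ^ (s / u) * x ^ s) ^ (u / s) = k * x ^ u := by
    rw [mul_rpow (by positivity) (by positivity), mul_rpow (by positivity) (by positivity),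
      ← rpow_mul hD.le, ← rpow_mul hk, ← rpow_mul hx, ← mul_assoc, ← mul_assoc,
      ← rpow_add hD]
    have h₁ : a / s + -(a / u) * (u / s) = 0 := by field_simp; ring
    have h₂ : s / u * (u / s) = 1 := by field_simp
    have h₃ : s * (u / s) = u := by field_simp
    rw [h₁, h₂, h₃, rpow_zero, rpow_one, one_mul]
  have harith : a / s * D = A := by rw [hD_def]; field_simp
  calc k * x ^ u = _ := hgeom.symm
    _ ≤ _ := hamgm
    _ = _ := by rw [harith]; ring

/-- At `a = 0` the base `A * u / 0` is the junk value `0`, but its exponent is `0` too, so the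
coefficient is `1` and the bound is trivial. -/
lemma mul_rpow_le_add_mul_rpow {A k a u x : ℝ} (hA : 0 < A) (hk : 0 ≤ k) (ha : 0 ≤ a)
    (hu : 0 < u) (hx : 0 ≤ x) :
    k * x ^ u ≤ A + u / (a + u) * (A * (a + u) / a) ^ (-(a / u)) * k ^ ((a + u) / u)
      * x ^ (a + u) := by
  rcases ha.eq_or_lt with rfl | ha
  · simp [hu.ne', hA.le]
  · exact mul_rpow_le_add_mul_rpow_of_pos hA hk ha hu hx

lemma exists_mem_Ioo_le_one_sub_mul {T K : ℝ} (hK : 0 < K) (hTK : T < K) :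
    ∃ β ∈ Ioo (0 : ℝ) 1, T ≤ (1 - β) * K := by
  obtain ⟨t, ht, htK⟩ := exists_between (max_lt hTK (half_lt_self hK))
  rw [max_lt_iff] at ht
  refine ⟨1 - t / K, ⟨?_, ?_⟩, ?_⟩
  · rw [sub_pos, div_lt_one hK]; exact htK
  · rw [sub_lt_self_iff]; exact div_pos (by linarith) hK
  · rw [sub_sub_cancel, div_mul_cancel₀ t hK.ne']; exact ht.1.le

theorem young_absorb_alpha (m m₀ α c₁ c₂ k₁ k₂ : ℝ) (hm : 1 < m)
    (hm₀ : m₀ ∈ Set.Ioo 1 m) (hα : 0 ≤ α) (hc₁ : c₁ < 0) (hc₂ : 0 < c₂)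
    (hk₁ : 0 < k₁) (hk₂ : 0 < k₂)
    (hcond : ((m - 1) / (α + m - 1))
        * (-c₁ * (α + m - 1) / (2 * α)) ^ (-(α / (m - 1)))
        * k₁ ^ ((α + m - 1) / (m - 1))
      + ((m₀ - 1) / (α + m - 1))
        * (-c₁ * (α + m - 1) / (2 * (α + m - m₀))) ^ (-((α + m - m₀) / (m₀ - 1)))
        * c₂ ^ ((α + m - 1) / (m₀ - 1))
      < k₂ ^ 2 / 2) :
    ∃ β ∈ Set.Ioo (0:ℝ) 1, ∀ x : ℝ, 0 ≤ x →
      c₁ + c₂ * x ^ (m₀ - 1) + k₁ * x ^ (m - 1)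
        - (1 - β) * (k₂ ^ 2 / 2) * x ^ (α + m - 1) ≤ 0 := by
  obtain ⟨hm₀1, hm₀m⟩ := hm₀
  have hA : 0 < -c₁ / 2 := by linarith
  obtain ⟨β, hβ, hle⟩ := exists_mem_Ioo_le_one_sub_mul (by positivity) hcond
  refine ⟨β, hβ, fun x hx => ?_⟩
  have hk₁_term := mul_rpow_le_add_mul_rpow hA hk₁.le hα (sub_pos.2 hm) hx
  have hc₂_term := mul_rpow_le_add_mul_rpow (a := α + m - m₀) hA hc₂.le (by linarith)
    (sub_pos.2 hm₀1) hx
  rw [show α + (m - 1) = α + m - 1 by ring, div_mul_eq_mul_div (-c₁) 2,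
    div_div (-c₁ * _)] at hk₁_term
  rw [show α + m - m₀ + (m₀ - 1) = α + m - 1 by ring, div_mul_eq_mul_div (-c₁) 2,
    div_div (-c₁ * _)] at hc₂_term
  have hβ_term := mul_le_mul_of_nonneg_right hle (rpow_nonneg hx (α + m - 1))
  linarith
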